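/- arXiv:2601.05247 — 3 statements merged into one kernel-verified Lean document; each statement's English description precedes it below -/
import Mathlib

section
/- Let n ≥ 1 and let π, π' be permutations of {1,…,n}. Let π_cyc be the cyclic permutation 1↦2↦⋯↦n↦1. Then π' ≠ π if and only if there exist integers j, k with 0 ≤ j < k < n and a permutation ρ of {1,…,n} fixing n (i.e., ρ(n) = n) such that π' = π_cyc^{-j} ∘ ρ ∘ π_cyc^{k} ∘ π. -/
/-!
With `σ = π' * π⁻¹` and `r = finRotate n`, the decomposition holds exactly when
`ρ = r ^ j * σ * (r ^ k)⁻¹` fixes the last point, i.e. when `σ` sends `n - 1 - k` to `n - 1 - j`.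
So the right-hand side says that `σ` moves some point strictly upwards, which happens iff `σ ≠ 1`:
the least point moved by a nontrivial permutation is moved upwards.
-/

open Equiv Fin.NatCast

theorem Equiv.Perm.exists_lt_apply_of_ne_one {α : Type*} [LinearOrder α] [WellFoundedLT α]
    {σ : Perm α} (hσ : σ ≠ 1) : ∃ x, x < σ x := by
  have hmoved : ∃ x, σ x ≠ x := by
    by_contra! h
    exact hσ (Equiv.ext h)
  obtain ⟨x, hx, hmin⟩ := WellFounded.has_min wellFounded_lt {x | σ x ≠ x} hmoved
  refine ⟨x, (lt_or_gt_of_ne hx).resolve_left fun hlt => hx ?_⟩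
  -- `σ x` lies below the least moved point, so it is fixed, and injectivity forces `σ x = x`.
  exact σ.injective (by_contra fun h => hmin (σ x) h hlt)

theorem finRotate_pow_apply {n : ℕ} [NeZero n] (k : ℕ) (i : Fin n) :
    (finRotate n ^ k) i = i + k := by
  induction k with
  | zero => simp
  | succ k ih => rw [pow_succ', Perm.mul_apply, ih, finRotate_apply, Nat.cast_succ, add_assoc]

theorem finRotate_pow_val_rev_apply {m : ℕ} (i : Fin (m + 1)) :
    (finRotate (m + 1) ^ (i.rev : ℕ)) i = Fin.last m := by
  rw [finRotate_pow_apply, Fin.cast_val_eq_self, ← Fin.last_sub, add_sub_cancel]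

theorem dvd_of_finRotate_pow_apply_eq_self {n d : ℕ} [NeZero n] {i : Fin n}
    (h : (finRotate n ^ d) i = i) : n ∣ d := by
  rwa [finRotate_pow_apply, add_eq_left, Fin.natCast_eq_zero] at h

/-- Lemma 7.2: π' ≠ π iff π' = π_cyc^{-j} ∘ ρ ∘ π_cyc^k ∘ π for some 0 ≤ j < k < n
and ρ fixing the last element. -/
theorem perm_decomposition (n : ℕ) (hn : 1 ≤ n) (π π' : Equiv.Perm (Fin n)) :
    π' ≠ π ↔ ∃ j k : ℕ, j < k ∧ k < n ∧
      ∃ ρ : Equiv.Perm (Fin n), ρ ⟨n - 1, by omega⟩ = ⟨n - 1, by omega⟩ ∧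
        π' = ((finRotate n) ^ j)⁻¹ * ρ * (finRotate n) ^ k * π := by
  obtain ⟨m, rfl⟩ : ∃ m, n = m + 1 := ⟨n - 1, by omega⟩
  change _ ↔ ∃ j k : ℕ, j < k ∧ k < m + 1 ∧ ∃ ρ : Perm (Fin (m + 1)),
    ρ (Fin.last m) = Fin.last m ∧ _
  set r := finRotate (m + 1)
  constructor
  · intro hne
    set σ := π' * π⁻¹
    obtain ⟨x, hx⟩ := σ.exists_lt_apply_of_ne_one (mul_inv_eq_one.not.mpr hne)
    have hx_last : (r ^ (x.rev : ℕ))⁻¹ (Fin.last m) = x := by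
      rw [Perm.inv_eq_iff_eq, finRotate_pow_val_rev_apply]
    refine ⟨(σ x).rev, x.rev, Fin.rev_lt_rev.mpr hx, x.rev.isLt,
      r ^ ((σ x).rev : ℕ) * σ * (r ^ (x.rev : ℕ))⁻¹, ?_, by simp only [σ]; group⟩
    rw [Perm.mul_apply, Perm.mul_apply, hx_last, finRotate_pow_val_rev_apply]
  · rintro ⟨j, k, hjk, hkn, ρ, hρ, hπ'⟩ rfl
    obtain ⟨d, rfl⟩ := Nat.exists_eq_add_of_lt hjk
    have hρ_eq : ρ = (r ^ (d + 1))⁻¹ := by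
      calc ρ = r ^ j * ((r ^ j)⁻¹ * ρ * r ^ (j + d + 1) * π') * π'⁻¹ * (r ^ (j + d + 1))⁻¹ := by
            group
        _ = (r ^ (d + 1))⁻¹ := by rw [← hπ']; group
    rw [hρ_eq, Perm.inv_eq_iff_eq] at hρ
    have hle := Nat.le_of_dvd d.succ_pos (dvd_of_finRotate_pow_apply_eq_self hρ.symm)
    omega
end

section
/- Let w ≥ 5 be an integer and suppose the signature consists of a single relation symbol of arity w, so that the number of k-types is |τ_k| = 2^{k^w}. Then ∏_{i=0}^{w−1} (2^{(i+1)^w})^{C(w−1,i)} ≥ (2^{w^w})^{2^{w/10}·(w+1)^{−2}}. -/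
/-!
With `t = ⌊w/10⌋`, keep only the term `i = w - 1 - t` of the product's exponent,
`(w - t)^w · C(w-1, t)`. Since `t ≤ w/10`, one has `(w - t)^w ≥ w^w / 4^t` and `C(w-1, t) ≥ 8^t`,
so this term is at least `w^w · 2^t`, while `2^{w/10} · (w+1)^{-2} ≤ 2^{t+1} / 4 ≤ 2^t`.
-/

open Finset

theorem Nat.pow_le_choose_of_succ_mul_le {m k n : ℕ} (h : (m + 1) * k ≤ n) :
    m ^ k ≤ n.choose k := by
  induction k with
  | zero => simp
  | succ k ih =>
    have hsub : m * (k + 1) ≤ n - k := by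
      apply Nat.le_sub_of_add_le
      nlinarith
    refine Nat.le_of_mul_le_mul_right ?_ k.succ_pos
    rw [Nat.choose_succ_right_eq]
    calc m ^ (k + 1) * (k + 1) = m ^ k * (m * (k + 1)) := by ring
      _ ≤ n.choose k * (n - k) := Nat.mul_le_mul (ih (by nlinarith)) hsub

theorem Real.exp_ten_div_nine_lt_four : Real.exp (10 / 9) < 4 := by
  calc Real.exp (10 / 9) < Real.exp (Real.log (2 ^ 2)) := by
        rw [Real.exp_lt_exp, Real.log_pow]
        linarith [Real.log_two_gt_d9]
    _ = 4 := by rw [Real.exp_log] <;> norm_num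

/-- Since `w / (w - t) = 1 + t / (w - t) ≤ exp (t / (w - t))` and `w t / (w - t) ≤ 10 t / 9`. -/
theorem Nat.pow_self_le_four_pow_mul_sub_pow {t w : ℕ} (h : 10 * t ≤ w) :
    w ^ w ≤ 4 ^ t * (w - t) ^ w := by
  rcases Nat.eq_zero_or_pos t with rfl | ht
  · simp
  set a : ℝ := ((w - t : ℕ) : ℝ) with ha_def
  have ha : 0 < a := by rw [ha_def]; exact_mod_cast (by omega : 0 < w - t)
  have h10a : 9 * (w : ℝ) ≤ 10 * a := by
    rw [ha_def, Nat.cast_sub (by omega)]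
    have : (10 * t : ℝ) ≤ w := by exact_mod_cast h
    linarith
  have hw : (w : ℝ) = a * (1 + t / a) := by
    rw [mul_add, mul_div_cancel₀ _ ha.ne', mul_one, ha_def, Nat.cast_sub (by omega)]
    ring
  have hratio : (1 + t / a) ^ w ≤ (4 : ℝ) ^ t :=
    calc (1 + t / a) ^ w ≤ Real.exp (t / a) ^ w := by
          gcongr
          linarith [Real.add_one_le_exp (t / a)]
      _ = Real.exp (w * t / a) := by rw [← Real.exp_nat_mul, mul_div_assoc]
      _ ≤ Real.exp (t * (10 / 9)) := by
          rw [Real.exp_le_exp, div_le_iff₀ ha]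
          nlinarith [(Nat.cast_nonneg t : (0 : ℝ) ≤ t)]
      _ = Real.exp (10 / 9) ^ t := Real.exp_nat_mul _ _
      _ ≤ 4 ^ t := by gcongr; exact Real.exp_ten_div_nine_lt_four.le
  have hreal : (w : ℝ) ^ w ≤ 4 ^ t * a ^ w := by
    rw [hw, mul_pow, mul_comm (4 ^ t)]
    gcongr
  rw [ha_def] at hreal
  exact_mod_cast hreal

theorem Nat.pow_self_mul_two_pow_le_sum_succ_pow_mul_choose {t w : ℕ} (hw : 0 < w)
    (h : 10 * t ≤ w) :
    w ^ w * 2 ^ t ≤ ∑ i ∈ range w, (i + 1) ^ w * (w - 1).choose i :=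
  calc w ^ w * 2 ^ t ≤ 4 ^ t * (w - t) ^ w * 2 ^ t := by
        gcongr
        exact Nat.pow_self_le_four_pow_mul_sub_pow h
    _ = (w - t) ^ w * 8 ^ t := by rw [show 8 = 4 * 2 from rfl, mul_pow]; ring
    _ ≤ (w - t) ^ w * (w - 1).choose t := by
        gcongr
        exact Nat.pow_le_choose_of_succ_mul_le (by omega)
    _ = (w - 1 - t + 1) ^ w * (w - 1).choose (w - 1 - t) := by
        rw [Nat.choose_symm (by omega), show w - 1 - t + 1 = w - t by omega]
    _ ≤ ∑ i ∈ range w, (i + 1) ^ w * (w - 1).choose i :=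
        single_le_sum (f := fun i => (i + 1) ^ w * (w - 1).choose i) (by simp)
          (by simp only [mem_range]; omega)

theorem Real.two_rpow_div_ten_mul_rpow_neg_two_le {w : ℕ} (hw : 1 ≤ w) :
    (2 : ℝ) ^ ((w : ℝ) / 10) * ((w : ℝ) + 1) ^ (-2 : ℝ) ≤ 2 ^ (w / 10) := by
  have hexp : (2 : ℝ) ^ ((w : ℝ) / 10) ≤ 2 ^ (w / 10) * 2 := by
    rw [← pow_succ, ← Real.rpow_natCast]
    refine Real.rpow_le_rpow_of_exponent_le one_le_two ?_
    rw [div_le_iff₀ (by norm_num)]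
    exact_mod_cast (by omega : w ≤ (w / 10 + 1) * 10)
  have hpoly : ((w : ℝ) + 1) ^ (-2 : ℝ) ≤ 1 / 2 := by
    rw [Real.rpow_neg (by positivity), Real.rpow_two, one_div]
    have : (1 : ℝ) ≤ w := by exact_mod_cast hw
    exact inv_anti₀ two_pos (by nlinarith)
  calc (2 : ℝ) ^ ((w : ℝ) / 10) * ((w : ℝ) + 1) ^ (-2 : ℝ)
      ≤ 2 ^ (w / 10) * 2 * (1 / 2) := by gcongr
    _ = 2 ^ (w / 10) := by ring

/-- For w ≥ 5 and a single relation symbol of arity w (so |τ_k| = 2^{k^w}):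
∏_{i=0}^{w−1} (2^{(i+1)^w})^{C(w−1,i)} ≥ (2^{w^w})^{2^{w/10}·(w+1)^{−2}}. -/
theorem prod_types_ge (w : ℕ) (hw : 5 ≤ w) :
    ∏ i ∈ range w, ((2 : ℝ) ^ ((i + 1) ^ w)) ^ ((w - 1).choose i) ≥
      ((2 : ℝ) ^ (w ^ w)) ^
        ((2 : ℝ) ^ ((w : ℝ) / 10) * ((w : ℝ) + 1) ^ (-2 : ℝ)) := by
  have hprod : ∏ i ∈ range w, ((2 : ℝ) ^ ((i + 1) ^ w)) ^ ((w - 1).choose i) =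
      2 ^ (∑ i ∈ range w, (i + 1) ^ w * (w - 1).choose i) := by
    simp_rw [← pow_mul]
    exact prod_pow_eq_pow_sum _ _ _
  rw [ge_iff_le, hprod, ← Real.rpow_natCast 2 (w ^ w), ← Real.rpow_mul zero_le_two,
    ← Real.rpow_natCast]
  refine Real.rpow_le_rpow_of_exponent_le one_le_two ?_
  calc ((w ^ w : ℕ) : ℝ) * (2 ^ ((w : ℝ) / 10) * ((w : ℝ) + 1) ^ (-2 : ℝ))
      ≤ (w ^ w : ℕ) * 2 ^ (w / 10) := by
        gcongr
        exact Real.two_rpow_div_ten_mul_rpow_neg_two_le (by omega)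
    _ ≤ _ := by
        exact_mod_cast Nat.pow_self_mul_two_pow_le_sum_succ_pow_mul_choose (by omega)
          (Nat.mul_div_le w 10)
end

section
/- Let t ≥ 2, and let w, c, R, ar, T_k be as follows: R a nonempty finite set with arities ar : R → {1,…,w}, c ≥ 0 constants, T_k = ∏_{r∈R} 2^{(k+c)^{ar(r)}}, and suppose w + c ≥ t. Set ε_t = 1/e − ((t−1)/t)^t. Then T_{w−1} ≥ T_w^{1/e − ε_t}. -/
/-!
Taking `log₂`, the claim reduces, arity by arity, to `m ^ a * ((t - 1) / t) ^ t ≤ (m - 1) ^ a` with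
`m = w + c` and `a ≤ m`. Since `((n - 1) / n) ^ n` increases with `n` (AM-GM), we have
`((t - 1) / t) ^ t ≤ ((m - 1) / m) ^ m ≤ ((m - 1) / m) ^ a`.
-/

open Real in
theorem sub_one_div_self_pow_le_succ {n : ℕ} (hn : 1 ≤ n) :
    (((n : ℝ) - 1) / n) ^ n ≤ ((((n + 1 : ℕ) : ℝ) - 1) / (n + 1 : ℕ)) ^ (n + 1) := by
  have hx : (1 : ℝ) ≤ n := by exact_mod_cast hn
  -- AM-GM for `n` copies of `(n - 1) / n` and one copy of `1`
  have amgm := geom_mean_le_arith_mean2_weighted (w₁ := n / (n + 1)) (w₂ := 1 / (n + 1))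
    (p₁ := ((n : ℝ) - 1) / n) (p₂ := 1) (by positivity) (by positivity)
    (div_nonneg (by linarith) (by positivity)) zero_le_one (by field_simp)
  rw [one_rpow, mul_one, show (n : ℝ) / (n + 1) * ((n - 1) / n) + 1 / (n + 1) * 1 = n / (n + 1) by
    field_simp; ring] at amgm
  have := pow_le_pow_left₀ (by positivity) amgm (n + 1)
  rw [← rpow_natCast _ (n + 1), ← rpow_mul (by positivity), Nat.cast_succ,
    div_mul_cancel₀ _ (by positivity), rpow_natCast] at this
  simpa using this

theorem sub_one_div_self_pow_monotoneOn :
    MonotoneOn (fun n : ℕ => (((n : ℝ) - 1) / n) ^ n) (Set.Ici 1) :=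
  monotoneOn_nat_Ici_of_le_succ fun _ hn => sub_one_div_self_pow_le_succ hn

theorem pow_mul_sub_one_div_self_pow_le {x : ℝ} (hx : 1 ≤ x) {a m : ℕ} (ham : a ≤ m) :
    x ^ a * ((x - 1) / x) ^ m ≤ (x - 1) ^ a :=
  calc x ^ a * ((x - 1) / x) ^ m ≤ x ^ a * ((x - 1) / x) ^ a := by
        gcongr x ^ a * ?_
        exact pow_le_pow_of_le_one (div_nonneg (by linarith) (by linarith))
          ((div_le_one (by linarith)).2 (by linarith)) ham
    _ = (x - 1) ^ a := by rw [div_pow, mul_div_cancel₀ _ (by positivity)]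

theorem prod_pow_rpow_le_prod_pow {ι : Type*} (s : Finset ι) {x α : ℝ} (hx : 1 ≤ x)
    {A B : ι → ℕ} (h : ∀ i ∈ s, A i * α ≤ B i) :
    (∏ i ∈ s, x ^ A i) ^ α ≤ ∏ i ∈ s, x ^ B i := by
  rw [← Real.finsetProd_rpow s _ fun i _ => by positivity]
  gcongr with i hi
  rw [← Real.rpow_natCast, ← Real.rpow_mul (by positivity), ← Real.rpow_natCast]
  exact Real.rpow_le_rpow_of_exponent_le hx (h i hi)

theorem ratio_types_general (t : ℕ) (ht : 2 ≤ t) (w c : ℕ) (hw : 1 ≤ w)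
    (R : Type*) [Fintype R] (ar : R → ℕ)
    (har : ∀ r, 1 ≤ ar r ∧ ar r ≤ w) (hwc : t ≤ w + c) :
    (∏ r : R, (2 : ℝ) ^ ((w - 1 + c) ^ (ar r))) ≥
      (∏ r : R, (2 : ℝ) ^ ((w + c) ^ (ar r))) ^
        (1 / Real.exp 1 - (1 / Real.exp 1 - (((t : ℝ) - 1) / t) ^ t)) := by
  rw [sub_sub_cancel, ge_iff_le]
  refine prod_pow_rpow_le_prod_pow _ one_le_two fun r _ => ?_
  have hα : (((t : ℝ) - 1) / t) ^ t ≤ ((((w + c : ℕ) : ℝ) - 1) / (w + c : ℕ)) ^ (w + c) :=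
    sub_one_div_self_pow_monotoneOn (Set.mem_Ici.2 (by omega)) (Set.mem_Ici.2 (by omega)) hwc
  have hsub : ((w - 1 + c : ℕ) : ℝ) = ((w + c : ℕ) : ℝ) - 1 := by
    rw [show w - 1 + c = w + c - 1 by omega, Nat.cast_sub (by omega), Nat.cast_one]
  calc (((w + c) ^ ar r : ℕ) : ℝ) * (((t : ℝ) - 1) / t) ^ t
      ≤ ((w + c : ℕ) : ℝ) ^ ar r * ((((w + c : ℕ) : ℝ) - 1) / (w + c : ℕ)) ^ (w + c) := by
        rw [Nat.cast_pow]; gcongr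
    _ ≤ (((w + c : ℕ) : ℝ) - 1) ^ ar r :=
        pow_mul_sub_one_div_self_pow_le (Nat.one_le_cast.2 (by omega)) (by have := har r; omega)
    _ = (((w - 1 + c) ^ ar r : ℕ) : ℝ) := by rw [Nat.cast_pow, hsub]

/-- T_{w−1} ≥ T_w^{1/e − ε_t}, where T_k = ∏_{r∈R} 2^{(k+c)^{ar(r)}} and
ε_t = 1/e − ((t−1)/t)^t, provided w + c ≥ t ≥ 2. -/
theorem ratio_types (t : ℕ) (ht : 2 ≤ t) (w c : ℕ) (hw : 1 ≤ w)
    (R : Type*) [Fintype R] [Nonempty R] (ar : R → ℕ)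
    (har : ∀ r, 1 ≤ ar r ∧ ar r ≤ w) (hwc : t ≤ w + c) :
    (∏ r : R, (2 : ℝ) ^ ((w - 1 + c) ^ (ar r))) ≥
      (∏ r : R, (2 : ℝ) ^ ((w + c) ^ (ar r))) ^
        (1 / Real.exp 1 - (1 / Real.exp 1 - (((t : ℝ) - 1) / t) ^ t)) :=
  ratio_types_general t ht w c hw R ar har hwc
end
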